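/- Let α, β be real, κ(s) = √(1−s²) and τ(s) = αs + β. For smooth functions F : (−1,1) × ℝ → ℂ define (L_+ F)(s,φ) = e^{iφ}( κ(s) ∂F/∂s (s,φ) + i κ'(s) ∂F/∂φ (s,φ) ), (L_− F)(s,φ) = e^{−iφ}( −κ(s) ∂F/∂s (s,φ) + i κ'(s) ∂F/∂φ (s,φ) − (τ(s)/κ(s)) F(s,φ) + 2κ'(s) F(s,φ) ), and (L_0 F)(s,φ) = −i ∂F/∂φ (s,φ). Then for every smooth F and every (s,φ) ∈ (−1,1) × ℝ, the commutator identity (L_+(L_− F))(s,φ) − (L_−(L_+ F))(s,φ) = 2(L_0 F)(s,φ) − (α+2) F(s,φ) holds; i.e. [L_+, L_−] = 2(L_0 − ((α+2)/2)·Id), so that L_± and L_0 generate a Lie algebra isomorphic to su(2) in the case σ(s) = 1 − s². -/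

import Mathlib

/-! STATEMENT 18: case `σ(s) = 1 - s²`, `τ(s) = αs + β`, `κ(s) = √(1-s²)`.
The first order differential operators `L₊`, `L₋`, `L₀` acting on smooth
complex valued functions of `(s,φ) ∈ (-1,1) × ℝ` satisfy the commutator
identity `[L₊, L₋] = 2(L₀ - ((α+2)/2)·Id)` (so they generate a Lie algebra
isomorphic to `su(2)`). -/

noncomputable def kappa (s : ℝ) : ℝ := Real.sqrt (1 - s ^ 2)

/-- `(L₊ F)(s,φ) = e^{iφ}(κ(s) ∂F/∂s + i κ'(s) ∂F/∂φ)`. -/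
noncomputable def Lplus (F : ℝ → ℝ → ℂ) (s φ : ℝ) : ℂ :=
  Complex.exp (Complex.I * (φ : ℂ)) *
    ((kappa s : ℂ) * deriv (fun t => F t φ) s
      + Complex.I * ((deriv kappa s : ℝ) : ℂ) * deriv (fun t => F s t) φ)

/-- `(L₋ F)(s,φ) = e^{-iφ}(-κ(s) ∂F/∂s + i κ'(s) ∂F/∂φ - (τ(s)/κ(s)) F + 2κ'(s) F)`
with `τ(s) = αs + β`. -/
noncomputable def Lminus (α β : ℝ) (F : ℝ → ℝ → ℂ) (s φ : ℝ) : ℂ :=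
  Complex.exp (-(Complex.I * (φ : ℂ))) *
    (-(kappa s : ℂ) * deriv (fun t => F t φ) s
      + Complex.I * ((deriv kappa s : ℝ) : ℂ) * deriv (fun t => F s t) φ
      - (((α * s + β) / kappa s : ℝ) : ℂ) * F s φ
      + 2 * ((deriv kappa s : ℝ) : ℂ) * F s φ)

/-- `(L₀ F)(s,φ) = -i ∂F/∂φ`. -/
noncomputable def Lzero (F : ℝ → ℝ → ℂ) (s φ : ℝ) : ℂ :=
  -Complex.I * deriv (fun t => F s t) φ

lemma kappa_pos {t : ℝ} (ht : t ∈ Set.Ioo (-1:ℝ) 1) : 0 < kappa t :=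
  Real.sqrt_pos.mpr (by nlinarith [ht.1, ht.2])

lemma kappa_sq {t : ℝ} (ht : t ∈ Set.Ioo (-1:ℝ) 1) : kappa t ^ 2 = 1 - t ^ 2 :=
  Real.sq_sqrt (by nlinarith [ht.1, ht.2])

lemma kappa_hasDerivAt {t : ℝ} (ht : t ∈ Set.Ioo (-1:ℝ) 1) :
    HasDerivAt kappa (-t / kappa t) t := by
  have h1 : (0:ℝ) < 1 - t ^ 2 := by nlinarith [ht.1, ht.2]
  have hq : HasDerivAt (fun u : ℝ => 1 - u ^ 2) (-(2 * t)) t := by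
    simpa using (hasDerivAt_pow 2 t).const_sub 1
  have := hq.sqrt h1.ne'
  convert this using 1
  · rfl
  unfold kappa
  rw [eq_div_iff (by positivity)]
  field_simp

lemma deriv_kappa {t : ℝ} (ht : t ∈ Set.Ioo (-1:ℝ) 1) :
    deriv kappa t = -t / kappa t := (kappa_hasDerivAt ht).deriv

lemma deriv_kappa_hasDerivAt {s : ℝ} (hs : s ∈ Set.Ioo (-1:ℝ) 1) :
    HasDerivAt (deriv kappa) (-1 / (kappa s) ^ 3) s := by
  have hk0 : kappa s ≠ 0 := (kappa_pos hs).ne'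
  have h1 : HasDerivAt (fun t : ℝ => -t / kappa t)
      ((-1 * kappa s - -s * (-s / kappa s)) / kappa s ^ 2) s :=
    ((hasDerivAt_id s).neg).div (kappa_hasDerivAt hs) hk0
  have hval : (-1 * kappa s - -s * (-s / kappa s)) / kappa s ^ 2 = -1 / (kappa s) ^ 3 := by
    have h2 := kappa_sq hs
    field_simp
    linear_combination (-1) * h2
  rw [hval] at h1
  apply h1.congr_of_eventuallyEq
  filter_upwards [isOpen_Ioo.mem_nhds hs] with t ht
  exact deriv_kappa ht

set_option maxHeartbeats 2000000 in
theorem commutator_Lplus_Lminus_su2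
    (α β : ℝ) (F : ℝ → ℝ → ℂ)
    (hF : ContDiffOn ℝ (⊤ : ℕ∞) (fun p : ℝ × ℝ => F p.1 p.2)
      (Set.Ioo (-1 : ℝ) 1 ×ˢ (Set.univ : Set ℝ))) :
    ∀ s ∈ Set.Ioo (-1 : ℝ) 1, ∀ φ : ℝ,
      Lplus (Lminus α β F) s φ - Lminus α β (Lplus F) s φ
        = 2 * Lzero F s φ - ((α : ℂ) + 2) * F s φ := by
  intro s hs φ
  have hk0 : kappa s ≠ 0 := (kappa_pos hs).ne'
  have hU : IsOpen (Set.Ioo (-1:ℝ) 1 ×ˢ (Set.univ : Set ℝ)) := isOpen_Ioo.prod isOpen_univ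
  set G : ℝ × ℝ → ℂ := fun p => F p.1 p.2 with hGdef
  have hGat : ∀ t ∈ Set.Ioo (-1:ℝ) 1, ∀ ψ : ℝ, ContDiffAt ℝ (⊤ : ℕ∞) G (t, ψ) := by
    intro t ht ψ
    exact hF.contDiffAt (hU.mem_nhds ⟨ht, trivial⟩)
  -- first partial derivatives
  have hd1 : ∀ t ∈ Set.Ioo (-1:ℝ) 1, ∀ ψ : ℝ,
      HasDerivAt (fun u => F u ψ) (fderiv ℝ G (t, ψ) (1, 0)) t := by
    intro t ht ψ
    have hdiff : HasFDerivAt G (fderiv ℝ G (t, ψ)) (t, ψ) :=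
      ((hGat t ht ψ).differentiableAt (by simp)).hasFDerivAt
    exact hdiff.comp_hasDerivAt t ((hasDerivAt_id t).prodMk (hasDerivAt_const t ψ))
  have hd2 : ∀ t ∈ Set.Ioo (-1:ℝ) 1, ∀ ψ : ℝ,
      HasDerivAt (fun v => F t v) (fderiv ℝ G (t, ψ) (0, 1)) ψ := by
    intro t ht ψ
    have hdiff : HasFDerivAt G (fderiv ℝ G (t, ψ)) (t, ψ) :=
      ((hGat t ht ψ).differentiableAt (by simp)).hasFDerivAt
    exact hdiff.comp_hasDerivAt ψ ((hasDerivAt_const ψ t).prodMk (hasDerivAt_id ψ))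
  -- second derivative
  have hDat : HasFDerivAt (fderiv ℝ G) (fderiv ℝ (fderiv ℝ G) (s, φ)) (s, φ) := by
    have h2 : ContDiffAt ℝ (⊤ : ℕ∞) (fderiv ℝ G) (s, φ) := (hGat s hs φ).fderiv_right (by simp)
    exact (h2.differentiableAt (by simp)).hasFDerivAt
  have hsymm : fderiv ℝ (fderiv ℝ G) (s, φ) (1, 0) (0, 1)
      = fderiv ℝ (fderiv ℝ G) (s, φ) (0, 1) (1, 0) :=
    (hGat s hs φ).isSymmSndFDerivAt (by simp; exact WithTop.coe_le_coe.mpr le_top) (1, 0) (0, 1)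
  have hHs : ∀ v : ℝ × ℝ, HasDerivAt (fun t => fderiv ℝ G (t, φ) v)
      (fderiv ℝ (fderiv ℝ G) (s, φ) (1, 0) v) s := by
    intro v
    have h1 : HasDerivAt (fun t => fderiv ℝ G (t, φ)) (fderiv ℝ (fderiv ℝ G) (s, φ) (1, 0)) s :=
      hDat.comp_hasDerivAt s ((hasDerivAt_id s).prodMk (hasDerivAt_const s φ))
    simpa using h1.clm_apply (hasDerivAt_const s v)
  have hHp : ∀ v : ℝ × ℝ, HasDerivAt (fun ψ => fderiv ℝ G (s, ψ) v)
      (fderiv ℝ (fderiv ℝ G) (s, φ) (0, 1) v) φ := by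
    intro v
    have h1 : HasDerivAt (fun ψ => fderiv ℝ G (s, ψ)) (fderiv ℝ (fderiv ℝ G) (s, φ) (0, 1)) φ :=
      hDat.comp_hasDerivAt φ ((hasDerivAt_const φ s).prodMk (hasDerivAt_id φ))
    simpa using h1.clm_apply (hasDerivAt_const φ v)
  have Hss : HasDerivAt (fun t => deriv (fun u => F u φ) t)
      (fderiv ℝ (fderiv ℝ G) (s, φ) (1, 0) (1, 0)) s := by
    apply (hHs (1, 0)).congr_of_eventuallyEq
    filter_upwards [isOpen_Ioo.mem_nhds hs] with t ht
    exact ((hd1 t ht φ).deriv)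
  have Hsp : HasDerivAt (fun t => deriv (fun v => F t v) φ)
      (fderiv ℝ (fderiv ℝ G) (s, φ) (1, 0) (0, 1)) s := by
    apply (hHs (0, 1)).congr_of_eventuallyEq
    filter_upwards [isOpen_Ioo.mem_nhds hs] with t ht
    exact ((hd2 t ht φ).deriv)
  have Hps : HasDerivAt (fun ψ => deriv (fun u => F u ψ) s)
      (fderiv ℝ (fderiv ℝ G) (s, φ) (0, 1) (1, 0)) φ := by
    apply (hHp (1, 0)).congr_of_eventuallyEq
    exact Filter.Eventually.of_forall fun ψ => (hd1 s hs ψ).deriv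
  have Hpp : HasDerivAt (fun ψ => deriv (fun v => F s v) ψ)
      (fderiv ℝ (fderiv ℝ G) (s, φ) (0, 1) (0, 1)) φ := by
    apply (hHp (0, 1)).congr_of_eventuallyEq
    exact Filter.Eventually.of_forall fun ψ => (hd2 s hs ψ).deriv
  -- abbreviations
  set fs := fderiv ℝ G (s, φ) (1, 0) with hfs
  set fp := fderiv ℝ G (s, φ) (0, 1) with hfp
  set fss := fderiv ℝ (fderiv ℝ G) (s, φ) (1, 0) (1, 0) with hfss
  set fsp := fderiv ℝ (fderiv ℝ G) (s, φ) (1, 0) (0, 1) with hfsp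
  set fps := fderiv ℝ (fderiv ℝ G) (s, φ) (0, 1) (1, 0) with hfps
  set fpp := fderiv ℝ (fderiv ℝ G) (s, φ) (0, 1) (0, 1) with hfpp
  -- 1-d building blocks at s
  have ck : HasDerivAt (fun t => ((kappa t : ℝ) : ℂ)) ((-s / kappa s : ℝ) : ℂ) s :=
    (kappa_hasDerivAt hs).ofReal_comp
  have ck' : HasDerivAt (fun t => ((deriv kappa t : ℝ) : ℂ)) ((-1 / kappa s ^ 3 : ℝ) : ℂ) s :=
    (deriv_kappa_hasDerivAt hs).ofReal_comp
  have cτ : HasDerivAt (fun t => (((α * t + β) / kappa t : ℝ) : ℂ))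
      (((α * 1 * kappa s - (α * s + β) * (-s / kappa s)) / kappa s ^ 2 : ℝ) : ℂ) s :=
    ((((hasDerivAt_id s).const_mul α).add_const β).div (kappa_hasDerivAt hs) hk0).ofReal_comp
  have e1 : HasDerivAt (fun t => F t φ) fs s := hd1 s hs φ
  have e2 : HasDerivAt (fun t => F s t) fp φ := hd2 s hs φ
  have hexpm : HasDerivAt (fun ψ : ℝ => Complex.exp (-(Complex.I * (ψ : ℂ))))
      (Complex.exp (-(Complex.I * (φ : ℂ))) * -(Complex.I * ((1 : ℝ) : ℂ))) φ :=
    ((((hasDerivAt_id φ).ofReal_comp).const_mul Complex.I).neg).cexp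
  have hexpp : HasDerivAt (fun ψ : ℝ => Complex.exp (Complex.I * (ψ : ℂ)))
      (Complex.exp (Complex.I * (φ : ℂ)) * (Complex.I * ((1 : ℝ) : ℂ))) φ :=
    (((hasDerivAt_id φ).ofReal_comp).const_mul Complex.I).cexp
  -- the four outer derivatives
  have H1 : HasDerivAt (fun t => Lminus α β F t φ)
      (Complex.exp (-(Complex.I * (φ : ℂ))) *
        ((((-((-s / kappa s : ℝ) : ℂ)) * deriv (fun u => F u φ) s + (-((kappa s : ℝ) : ℂ)) * fss)
          + ((Complex.I * ((-1 / kappa s ^ 3 : ℝ) : ℂ)) * deriv (fun v => F s v) φ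
              + (Complex.I * ((deriv kappa s : ℝ) : ℂ)) * fsp))
          - ((((α * 1 * kappa s - (α * s + β) * (-s / kappa s)) / kappa s ^ 2 : ℝ) : ℂ) * F s φ
              + (((α * s + β) / kappa s : ℝ) : ℂ) * fs)
          + ((2 * ((-1 / kappa s ^ 3 : ℝ) : ℂ)) * F s φ
              + (2 * ((deriv kappa s : ℝ) : ℂ)) * fs))) s := by
    exact ((((ck.neg.mul Hss).add ((ck'.const_mul Complex.I).mul Hsp)).sub
      (cτ.mul e1)).add ((ck'.const_mul 2).mul e1)).const_mul
        (Complex.exp (-(Complex.I * (φ : ℂ))))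
  have H3 : HasDerivAt (fun t => Lplus F t φ)
      (Complex.exp (Complex.I * (φ : ℂ)) *
        ((((-s / kappa s : ℝ) : ℂ) * deriv (fun u => F u φ) s + ((kappa s : ℝ) : ℂ) * fss)
          + ((Complex.I * ((-1 / kappa s ^ 3 : ℝ) : ℂ)) * deriv (fun v => F s v) φ
              + (Complex.I * ((deriv kappa s : ℝ) : ℂ)) * fsp))) s := by
    exact ((ck.mul Hss).add ((ck'.const_mul Complex.I).mul Hsp)).const_mul
      (Complex.exp (Complex.I * (φ : ℂ)))
  have H2 : HasDerivAt (fun t => Lminus α β F s t)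
      ((Complex.exp (-(Complex.I * (φ : ℂ))) * -(Complex.I * ((1 : ℝ) : ℂ))) *
        (((-((kappa s : ℝ) : ℂ)) * deriv (fun u => F u φ) s
            + (Complex.I * ((deriv kappa s : ℝ) : ℂ)) * deriv (fun v => F s v) φ
          - (((α * s + β) / kappa s : ℝ) : ℂ) * F s φ)
          + (2 * ((deriv kappa s : ℝ) : ℂ)) * F s φ)
        + Complex.exp (-(Complex.I * (φ : ℂ))) *
          (((-((kappa s : ℝ) : ℂ)) * fps + (Complex.I * ((deriv kappa s : ℝ) : ℂ)) * fpp
            - (((α * s + β) / kappa s : ℝ) : ℂ) * fp)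
            + (2 * ((deriv kappa s : ℝ) : ℂ)) * fp)) φ := by
    exact hexpm.mul (((Hps.const_mul (-((kappa s : ℝ) : ℂ))).add
      (Hpp.const_mul (Complex.I * ((deriv kappa s : ℝ) : ℂ)))).sub
        (e2.const_mul (((α * s + β) / kappa s : ℝ) : ℂ)) |>.add
          (e2.const_mul (2 * ((deriv kappa s : ℝ) : ℂ))))
  have H4 : HasDerivAt (fun t => Lplus F s t)
      ((Complex.exp (Complex.I * (φ : ℂ)) * (Complex.I * ((1 : ℝ) : ℂ))) *
        (((kappa s : ℝ) : ℂ) * deriv (fun u => F u φ) s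
          + (Complex.I * ((deriv kappa s : ℝ) : ℂ)) * deriv (fun v => F s v) φ)
        + Complex.exp (Complex.I * (φ : ℂ)) *
          (((kappa s : ℝ) : ℂ) * fps + (Complex.I * ((deriv kappa s : ℝ) : ℂ)) * fpp)) φ := by
    exact hexpp.mul ((Hps.const_mul ((kappa s : ℝ) : ℂ)).add
      (Hpp.const_mul (Complex.I * ((deriv kappa s : ℝ) : ℂ))))
  have hk2c : ((kappa s : ℝ) : ℂ) ^ 2 = 1 - (s : ℂ) ^ 2 := by
    exact_mod_cast congrArg Complex.ofReal (kappa_sq hs)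
  have hk0c : ((kappa s : ℝ) : ℂ) ≠ 0 := by exact_mod_cast hk0
  have hEne : Complex.exp (Complex.I * (φ : ℂ)) ≠ 0 := Complex.exp_ne_zero _
  have hKinv : ((kappa s : ℝ) : ℂ) * ((kappa s : ℝ) : ℂ)⁻¹ = 1 := mul_inv_cancel₀ hk0c
  have hEinv : Complex.exp (Complex.I * (φ : ℂ)) * (Complex.exp (Complex.I * (φ : ℂ)))⁻¹ = 1 :=
    mul_inv_cancel₀ hEne
  have hI : Complex.I ^ 2 = -1 := Complex.I_sq
  rw [show Lplus (Lminus α β F) s φ = Complex.exp (Complex.I * (φ : ℂ)) *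
        ((kappa s : ℂ) * deriv (fun t => Lminus α β F t φ) s
          + Complex.I * ((deriv kappa s : ℝ) : ℂ) * deriv (fun t => Lminus α β F s t) φ) from rfl,
      show Lminus α β (Lplus F) s φ = Complex.exp (-(Complex.I * (φ : ℂ))) *
        (-(kappa s : ℂ) * deriv (fun t => Lplus F t φ) s
          + Complex.I * ((deriv kappa s : ℝ) : ℂ) * deriv (fun t => Lplus F s t) φ
          - (((α * s + β) / kappa s : ℝ) : ℂ) * Lplus F s φ
          + 2 * ((deriv kappa s : ℝ) : ℂ) * Lplus F s φ) from rfl,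
      show Lzero F s φ = -Complex.I * deriv (fun t => F s t) φ from rfl,
      H1.deriv, H2.deriv, H3.deriv, H4.deriv,
      show Lplus F s φ = Complex.exp (Complex.I * (φ : ℂ)) *
        ((kappa s : ℂ) * deriv (fun t => F t φ) s
          + Complex.I * ((deriv kappa s : ℝ) : ℂ) * deriv (fun t => F s t) φ) from rfl,
      e1.deriv, e2.deriv, deriv_kappa hs, ← hsymm]
  rw [Complex.exp_neg]
  push_cast
  linear_combination
    (-(Complex.exp (Complex.I * (φ:ℂ)) * (Complex.exp (Complex.I * (φ:ℂ)))⁻¹ * (α:ℂ) * F s φ)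
      - 2 * ((kappa s : ℂ))⁻¹ ^ 2 * Complex.exp (Complex.I * (φ:ℂ)) * (Complex.exp (Complex.I * (φ:ℂ)))⁻¹ * F s φ
      - ((kappa s : ℂ))⁻¹ ^ 2 * Complex.exp (Complex.I * (φ:ℂ)) * (Complex.exp (Complex.I * (φ:ℂ)))⁻¹ * (s:ℂ) * (β:ℂ) * F s φ
      - ((kappa s : ℂ))⁻¹ ^ 2 * Complex.exp (Complex.I * (φ:ℂ)) * (Complex.exp (Complex.I * (φ:ℂ)))⁻¹ * (s:ℂ) ^ 2 * (α:ℂ) * F s φ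
      - 2 * ((kappa s : ℂ))⁻¹ ^ 2 * Complex.exp (Complex.I * (φ:ℂ)) * (Complex.exp (Complex.I * (φ:ℂ)))⁻¹ * Complex.I * fp
      - (kappa s : ℂ) * ((kappa s : ℂ))⁻¹ * Complex.exp (Complex.I * (φ:ℂ)) * (Complex.exp (Complex.I * (φ:ℂ)))⁻¹ * (α:ℂ) * F s φ
      - (2 * F s φ + 2 * Complex.I * fp) * ((kappa s : ℂ) * ((kappa s : ℂ))⁻¹ + 1)) * hKinv
    + (-((α:ℂ) * F s φ) - 2 * ((kappa s : ℂ))⁻¹ ^ 2 * F s φ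
      + 2 * ((kappa s : ℂ))⁻¹ ^ 2 * (s:ℂ) ^ 2 * F s φ
      - 2 * ((kappa s : ℂ))⁻¹ ^ 2 * Complex.I * fp
      + 2 * ((kappa s : ℂ))⁻¹ ^ 2 * Complex.I * (s:ℂ) ^ 2 * fp) * hEinv
    + ((2 * F s φ + 2 * Complex.I * fp) * ((kappa s : ℂ))⁻¹ ^ 2) * hk2c
    + (-(((kappa s : ℂ))⁻¹ ^ 2 * Complex.exp (Complex.I * (φ:ℂ)) * (Complex.exp (Complex.I * (φ:ℂ)))⁻¹ * (s:ℂ) * (β:ℂ) * F s φ)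
      - 2 * ((kappa s : ℂ))⁻¹ ^ 2 * Complex.exp (Complex.I * (φ:ℂ)) * (Complex.exp (Complex.I * (φ:ℂ)))⁻¹ * (s:ℂ) ^ 2 * F s φ
      - ((kappa s : ℂ))⁻¹ ^ 2 * Complex.exp (Complex.I * (φ:ℂ)) * (Complex.exp (Complex.I * (φ:ℂ)))⁻¹ * (s:ℂ) ^ 2 * (α:ℂ) * F s φ
      - 2 * ((kappa s : ℂ))⁻¹ ^ 2 * Complex.exp (Complex.I * (φ:ℂ)) * (Complex.exp (Complex.I * (φ:ℂ)))⁻¹ * Complex.I * (s:ℂ) ^ 2 * fp) * hI
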